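/- For integers 0 ≤ t ≤ n and q ≥ 2, the q-ary Hamming ball volume satisfies V_q(n,t) = ∑_{i=0}^{t} (n choose i)(q−1)^i ≤ q^{n·H_q(t/n)}, where H_q(x) = x·log_q(q−1) − x·log_q(x) − (1−x)·log_q(1−x) is the q-ary entropy function, provided 0 < t/n ≤ 1 − 1/q. -/

import Mathlib

/-- The `q`-ary entropy function `H_q(x) = x·log_q(q−1) − x·log_q x − (1−x)·log_q(1−x)`. -/
noncomputable def qaryEntropy (q : ℕ) (x : ℝ) : ℝ :=
  x * Real.logb q (q - 1) - x * Real.logb q x - (1 - x) * Real.logb q (1 - x)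

/-!
Put `p = t/n`. The right-hand side equals `(q-1)^t / (p^t (1-p)^(n-t))`. Since
`p ≤ (q-1)(1-p)`, each term `C(n,i) (q-1)^i p^t (1-p)^(n-t)` with `i ≤ t` is at most
`(q-1)^t` times the binomial probability `C(n,i) p^i (1-p)^(n-i)`, and these probabilities
sum to at most `1`.
-/

open Finset

section BinomialWeights

variable {a p : ℝ} {n t i : ℕ}

theorem nonneg_of_le_mul_one_sub (hp0 : 0 ≤ p) (hp1 : p ≤ 1) (hpa : p ≤ a * (1 - p)) : 0 ≤ a := by
  rcases hp1.lt_or_eq with hp1 | rfl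
  · exact nonneg_of_mul_nonneg_left (hp0.trans hpa) (sub_pos.mpr hp1)
  · norm_num at hpa

theorem pow_mul_pow_mul_one_sub_pow_le (hp0 : 0 ≤ p) (hp1 : p ≤ 1) (hpa : p ≤ a * (1 - p))
    (hit : i ≤ t) (htn : t ≤ n) :
    a ^ i * (p ^ t * (1 - p) ^ (n - t)) ≤ a ^ t * (p ^ i * (1 - p) ^ (n - i)) := by
  have ha := nonneg_of_le_mul_one_sub hp0 hp1 hpa
  have h1p : 0 ≤ 1 - p := sub_nonneg.mpr hp1
  obtain ⟨k, rfl⟩ := Nat.exists_eq_add_of_le hit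
  have hni : n - i = (n - (i + k)) + k := by omega
  calc a ^ i * (p ^ (i + k) * (1 - p) ^ (n - (i + k)))
      = (a ^ i * p ^ i * (1 - p) ^ (n - (i + k))) * p ^ k := by ring
    _ ≤ (a ^ i * p ^ i * (1 - p) ^ (n - (i + k))) * (a * (1 - p)) ^ k := by gcongr
    _ = a ^ (i + k) * (p ^ i * (1 - p) ^ (n - i)) := by
      rw [hni, mul_pow]; ring

theorem sum_choose_mul_pow_mul_one_sub_pow (n : ℕ) (p : ℝ) :
    ∑ i ∈ range (n + 1), (n.choose i : ℝ) * (p ^ i * (1 - p) ^ (n - i)) = 1 := by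
  have h := (add_pow p (1 - p) n).symm
  rw [add_sub_cancel, one_pow] at h
  exact (sum_congr rfl fun i _ => by ring).trans h

theorem sum_range_choose_mul_pow_mul_le (hp0 : 0 ≤ p) (hp1 : p ≤ 1) (hpa : p ≤ a * (1 - p))
    (htn : t ≤ n) :
    (∑ i ∈ range (t + 1), (n.choose i : ℝ) * a ^ i) * (p ^ t * (1 - p) ^ (n - t)) ≤ a ^ t := by
  have ha := nonneg_of_le_mul_one_sub hp0 hp1 hpa
  have h1p : 0 ≤ 1 - p := sub_nonneg.mpr hp1
  calc (∑ i ∈ range (t + 1), (n.choose i : ℝ) * a ^ i) * (p ^ t * (1 - p) ^ (n - t))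
        = ∑ i ∈ range (t + 1), (n.choose i : ℝ) * (a ^ i * (p ^ t * (1 - p) ^ (n - t))) := by
        rw [sum_mul]; exact sum_congr rfl fun i _ => by ring
    _ ≤ ∑ i ∈ range (t + 1), (n.choose i : ℝ) * (a ^ t * (p ^ i * (1 - p) ^ (n - i))) := by
      refine sum_le_sum fun i hi => mul_le_mul_of_nonneg_left ?_ (Nat.cast_nonneg _)
      exact pow_mul_pow_mul_one_sub_pow_le hp0 hp1 hpa (Nat.lt_succ_iff.mp (mem_range.mp hi)) htn
    _ ≤ ∑ i ∈ range (n + 1), (n.choose i : ℝ) * (a ^ t * (p ^ i * (1 - p) ^ (n - i))) :=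
      sum_le_sum_of_subset_of_nonneg (range_subset_range.mpr (by omega))
        fun i _ _ => by positivity
    _ = a ^ t := by
      simp_rw [mul_left_comm _ (a ^ t)]
      rw [← mul_sum, sum_choose_mul_pow_mul_one_sub_pow, mul_one]

end BinomialWeights

theorem rpow_natCast_mul_logb {b x : ℝ} (hb : 0 < b) (hb1 : b ≠ 1) (hx : 0 < x) (k : ℕ) :
    b ^ ((k : ℝ) * Real.logb b x) = x ^ k := by
  rw [mul_comm, Real.rpow_mul hb.le, Real.rpow_logb hb hb1 hx, Real.rpow_natCast]

theorem rpow_natCast_mul_qaryEntropy {q n t : ℕ} {p : ℝ} (hq : 2 ≤ q) (hp0 : 0 < p) (hp1 : p < 1)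
    (htn : t ≤ n) (hnp : n * p = t) :
    (q : ℝ) ^ ((n : ℝ) * qaryEntropy q p) = ((q : ℝ) - 1) ^ t / (p ^ t * (1 - p) ^ (n - t)) := by
  have hq1 : (1 : ℝ) < q := by exact_mod_cast hq
  have hq0 : (0 : ℝ) < q := by linarith
  have hnp' : (n : ℝ) * (1 - p) = ((n - t : ℕ) : ℝ) := by
    rw [Nat.cast_sub htn, mul_sub, mul_one, hnp]
  have hexp : (n : ℝ) * qaryEntropy q p = (t : ℝ) * Real.logb q ((q : ℝ) - 1)
      - ((t : ℝ) * Real.logb q p + ((n - t : ℕ) : ℝ) * Real.logb q (1 - p)) := by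
    rw [← hnp, ← hnp']
    unfold qaryEntropy
    ring
  rw [hexp, Real.rpow_sub hq0, Real.rpow_add hq0, rpow_natCast_mul_logb hq0 hq1.ne' (by linarith),
    rpow_natCast_mul_logb hq0 hq1.ne' hp0, rpow_natCast_mul_logb hq0 hq1.ne' (by linarith)]

/-- For integers `0 ≤ t ≤ n` and `q ≥ 2` with `0 < t/n ≤ 1 − 1/q`, the `q`-ary Hamming ball
volume satisfies `V_q(n,t) = ∑_{i=0}^{t} (n choose i)(q−1)^i ≤ q^{n·H_q(t/n)}`. -/
theorem stmt_5 (n t q : ℕ) (htn : t ≤ n) (hq : 2 ≤ q)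
    (hpos : 0 < (t : ℝ) / n) (hle : (t : ℝ) / n ≤ 1 - 1 / q) :
    (∑ i ∈ Finset.range (t + 1), (n.choose i : ℝ) * ((q : ℝ) - 1) ^ i)
      ≤ (q : ℝ) ^ ((n : ℝ) * qaryEntropy q ((t : ℝ) / n)) := by
  set p : ℝ := (t : ℝ) / n with hp
  have hn : (n : ℝ) ≠ 0 := by
    rintro h
    simp [hp, h] at hpos
  have hp1 : p < 1 := by
    have : (0 : ℝ) < 1 / q := by positivity
    linarith
  have hpa : p ≤ ((q : ℝ) - 1) * (1 - p) := by
    have hq0 : (0 : ℝ) < q := by positivity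
    have : (q : ℝ) * (1 - 1 / q) = q - 1 := by field_simp
    nlinarith [mul_le_mul_of_nonneg_left hle hq0.le]
  have hnp : (n : ℝ) * p = t := by rw [hp]; field_simp
  rw [rpow_natCast_mul_qaryEntropy hq hpos hp1 htn hnp, le_div_iff₀ (by positivity)]
  exact sum_range_choose_mul_pow_mul_le hpos.le hp1.le hpa htn
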